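/- Let (P, 𝓛) be a point-line geometry with P nonempty satisfying: every line contains at least 3 points; any two distinct points lie on at most one common line; every point lies on at least one line; (Buekenhout–Shult axiom) for every point p and every line l with p ∉ l, either exactly one point of l is collinear with p or every point of l is collinear with p; and (nondegeneracy) for every point p there is a point not collinear with p. Then P is not the union of two proper geometric hyperplanes: if H₁ and H₂ are geometric hyperplanes with H₁ ∪ H₂ = P, then H₁ = P or H₂ = P. -/

import Mathlib

/-- Two points of a point-line geometry `(P, 𝓛)` are collinear if some line contains both. -/
def GeomCollinear {P : Type*} (𝓛 : Set (Set P)) (p q : P) : Prop :=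
  ∃ l ∈ 𝓛, p ∈ l ∧ q ∈ l

/-- A subspace of a point-line geometry: every line containing at least two distinct points
of `S` is contained in `S`. -/
def IsGeomSubspace {P : Type*} (𝓛 : Set (Set P)) (S : Set P) : Prop :=
  ∀ l ∈ 𝓛, ∀ p ∈ l, ∀ q ∈ l, p ∈ S → q ∈ S → p ≠ q → l ⊆ S

/-- A geometric hyperplane: a subspace meeting every line. -/
def IsGeomHyperplane {P : Type*} (𝓛 : Set (Set P)) (H : Set P) : Prop :=
  IsGeomSubspace 𝓛 H ∧ ∀ l ∈ 𝓛, (l ∩ H).Nonempty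

/-!
Suppose `P = A ∪ B` for proper hyperplanes `A`, `B`. As lines have three points, every line lies
in `A` or in `B`, so no point of `A \ B` is collinear with a point of `B \ A`. The
Buekenhout–Shult axiom then shows: a point of `A` collinear with a point off `A` is collinear
with every point off `B`. Hence a point `r` collinear both with some `p ∉ B` and with some
`q ∉ A` is collinear with every point off `A ∩ B`; call such a point central. Projecting `q`
onto a line through `p` produces a central point `r`. A point `u` not collinear with `r`
(nondegeneracy) lies in `A ∩ B`, projects onto lines `pr` and `qr` outside `r`, and so is
central as well. But the line `pu` has two points off `B`, both collinear with `r`, so `r` is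
collinear with `u`.
-/

section

variable {P : Type*} {𝓛 : Set (Set P)}

lemma GeomCollinear.symm {p q : P} (h : GeomCollinear 𝓛 p q) : GeomCollinear 𝓛 q p :=
  let ⟨l, hl, hp, hq⟩ := h
  ⟨l, hl, hq, hp⟩

lemma Set.exists_ne_ne_of_three_le_encard {s : Set P} (h : 3 ≤ s.encard) (a b : P) :
    ∃ c ∈ s, c ≠ a ∧ c ≠ b := by
  by_contra! hs
  have hsub : s ⊆ {a, b} := fun c hc => by
    by_cases hca : c = a
    · exact Or.inl hca
    · exact Or.inr (hs c hc hca)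
  have : s.encard ≤ 2 :=
    (Set.encard_le_encard hsub).trans ((Set.encard_insert_le _ _).trans (by simp; norm_num))
  have : (3 : ℕ∞) ≤ 2 := h.trans this
  norm_num at this

lemma IsGeomSubspace.eq_of_mem {S l : Set P} (hS : IsGeomSubspace 𝓛 S) (hl : l ∈ 𝓛)
    {x y z : P} (hx : x ∈ l) (hy : y ∈ l) (hxS : x ∈ S) (hyS : y ∈ S) (hz : z ∈ l)
    (hzS : z ∉ S) : x = y := by
  by_contra hxy
  exact hzS (hS l hl x hx y hy hxS hyS hxy hz)

end

namespace PointLineGeometry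

variable {P : Type*} {𝓛 : Set (Set P)}

def BuekenhoutShult (𝓛 : Set (Set P)) : Prop :=
  ∀ p : P, ∀ l ∈ 𝓛, p ∉ l →
    (∃! q : P, q ∈ l ∧ GeomCollinear 𝓛 p q) ∨ (∀ q ∈ l, GeomCollinear 𝓛 p q)

namespace BuekenhoutShult

lemma exists_collinear_ne (hBS : BuekenhoutShult 𝓛) {l : Set P} (hl : l ∈ 𝓛) {p r : P}
    (hr : r ∈ l) (hpr : ¬ GeomCollinear 𝓛 p r) :
    ∃ x ∈ l, x ≠ r ∧ GeomCollinear 𝓛 p x := by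
  have hpl : p ∉ l := fun hp => hpr ⟨l, hl, hp, hr⟩
  rcases hBS p l hl hpl with ⟨x, ⟨hx, hpx⟩, -⟩ | hall
  · exact ⟨x, hx, fun hxr => hpr (hxr ▸ hpx), hpx⟩
  · exact absurd (hall r hr) hpr

lemma collinear_of_collinear_of_collinear (hBS : BuekenhoutShult 𝓛) {l : Set P} (hl : l ∈ 𝓛)
    {p a b c : P} (ha : a ∈ l) (hb : b ∈ l) (hab : a ≠ b) (hpa : GeomCollinear 𝓛 p a)
    (hpb : GeomCollinear 𝓛 p b) (hc : c ∈ l) : GeomCollinear 𝓛 p c := by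
  by_cases hp : p ∈ l
  · exact ⟨l, hl, hp, hc⟩
  rcases hBS p l hl hp with ⟨x, -, hx⟩ | hall
  · exact absurd ((hx a ⟨ha, hpa⟩).trans (hx b ⟨hb, hpb⟩).symm) hab
  · exact hall c hc

lemma exists_collinear_not_mem (hBS : BuekenhoutShult 𝓛) {S l : Set P}
    (hS : IsGeomSubspace 𝓛 S) (hl : l ∈ 𝓛) {p r u : P} (hr : r ∈ l) (hrS : r ∈ S) (hp : p ∈ l)
    (hpS : p ∉ S) (hur : ¬ GeomCollinear 𝓛 u r) : ∃ x ∉ S, GeomCollinear 𝓛 u x := by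
  obtain ⟨x, hx, hxr, hux⟩ := hBS.exists_collinear_ne hl hr hur
  exact ⟨x, fun hxS => hxr (hS.eq_of_mem hl hx hr hxS hrS hp hpS), hux⟩

end BuekenhoutShult

section Cover

variable {A B : Set P}

lemma subset_or_subset_of_union_eq_univ (hline3 : ∀ l ∈ 𝓛, 3 ≤ l.encard)
    (hA : IsGeomSubspace 𝓛 A) (hB : IsGeomSubspace 𝓛 B) (hcover : A ∪ B = Set.univ) :
    ∀ l ∈ 𝓛, l ⊆ A ∨ l ⊆ B := by
  intro l hl
  have hmem (x : P) : x ∈ A ∨ x ∈ B := Set.eq_univ_iff_forall.mp hcover x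
  by_contra! h
  obtain ⟨a, hal, haA⟩ := Set.not_subset.mp h.1
  obtain ⟨b, hbl, hbB⟩ := Set.not_subset.mp h.2
  obtain ⟨c, hcl, hca, hcb⟩ := Set.exists_ne_ne_of_three_le_encard (hline3 l hl) a b
  rcases hmem c with hcA | hcB
  · exact haA (hA l hl b hbl c hcl ((hmem b).resolve_right hbB) hcA (Ne.symm hcb) hal)
  · exact hbB (hB l hl a hal c hcl ((hmem a).resolve_left haA) hcB (Ne.symm hca) hbl)

lemma mem_of_collinear_of_not_mem (hlines : ∀ l ∈ 𝓛, l ⊆ A ∨ l ⊆ B) {x y : P}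
    (hxy : GeomCollinear 𝓛 x y) (hy : y ∉ B) : x ∈ A := by
  obtain ⟨l, hl, hx, hy'⟩ := hxy
  exact (hlines l hl).elim (· hx) fun hlB => absurd (hlB hy') hy

/-- The line `ws` lies in `B` and meets `A` only in `w`, so the projection of a point `u ∉ B`
onto it, which is joined to `u` by a line of `A`, must be `w`. -/
lemma collinear_of_collinear_not_mem (hBS : BuekenhoutShult 𝓛)
    (hlines : ∀ l ∈ 𝓛, l ⊆ A ∨ l ⊆ B) (hA : IsGeomSubspace 𝓛 A) {w s u : P} (hw : w ∈ A)
    (hs : s ∉ A) (hws : GeomCollinear 𝓛 w s) (hu : u ∉ B) : GeomCollinear 𝓛 u w := by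
  by_contra huw
  obtain ⟨n, hn, hwn, hsn⟩ := hws
  obtain ⟨x, hxn, hxw, hux⟩ := hBS.exists_collinear_ne hn hwn huw
  have hxA : x ∈ A := mem_of_collinear_of_not_mem hlines hux.symm hu
  exact hxw (hA.eq_of_mem hn hxn hwn hxA hw hsn hs)

lemma collinear_of_not_mem_inter (hBS : BuekenhoutShult 𝓛)
    (hlines : ∀ l ∈ 𝓛, l ⊆ A ∨ l ⊆ B) (hA : IsGeomSubspace 𝓛 A) (hB : IsGeomSubspace 𝓛 B)
    {r p q : P} (hrp : GeomCollinear 𝓛 r p) (hp : p ∉ B) (hrq : GeomCollinear 𝓛 r q)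
    (hq : q ∉ A) : ∀ x ∉ A ∩ B, GeomCollinear 𝓛 r x := by
  intro x hx
  have hlines' : ∀ l ∈ 𝓛, l ⊆ B ∨ l ⊆ A := fun l hl => (hlines l hl).symm
  rcases not_and_or.mp hx with hxA | hxB
  · exact (collinear_of_collinear_not_mem hBS hlines' hB
      (mem_of_collinear_of_not_mem hlines' hrq hq) hp hrp hxA).symm
  · exact (collinear_of_collinear_not_mem hBS hlines hA
      (mem_of_collinear_of_not_mem hlines hrp hp) hq hrq hxB).symm

/-- Two points of `pu` lie off `B`, and `r` is collinear with both. -/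
lemma collinear_of_forall_not_mem_inter_collinear (hline3 : ∀ l ∈ 𝓛, 3 ≤ l.encard)
    (hBS : BuekenhoutShult 𝓛) (hB : IsGeomSubspace 𝓛 B) {r u p : P}
    (hr : ∀ x ∉ A ∩ B, GeomCollinear 𝓛 r x) (hu : ∀ x ∉ A ∩ B, GeomCollinear 𝓛 u x)
    (huB : u ∈ B) (hp : p ∉ B) : GeomCollinear 𝓛 r u := by
  have hpAB : p ∉ A ∩ B := fun h => hp h.2
  obtain ⟨l, hl, hul, hpl⟩ := hu p hpAB
  obtain ⟨e, hel, heu, hep⟩ := Set.exists_ne_ne_of_three_le_encard (hline3 l hl) u p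
  have heB : e ∉ B := fun heB => heu (hB.eq_of_mem hl hel hul heB huB hpl hp)
  exact hBS.collinear_of_collinear_of_collinear hl hpl hel hep.symm (hr p hpAB)
    (hr e fun h => heB h.2) hul

end Cover

end PointLineGeometry

open PointLineGeometry PointLineGeometry.BuekenhoutShult in
theorem polar_space_not_union_of_two_proper_hyperplanes_general
    {P : Type*} (𝓛 : Set (Set P))
    (hline3 : ∀ l ∈ 𝓛, 3 ≤ l.encard)
    (hpointline : ∀ p : P, ∃ l ∈ 𝓛, p ∈ l)
    (hBS : ∀ p : P, ∀ l ∈ 𝓛, p ∉ l →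
      (∃! q : P, q ∈ l ∧ GeomCollinear 𝓛 p q) ∨ (∀ q ∈ l, GeomCollinear 𝓛 p q))
    (hnondeg : ∀ p : P, ∃ q : P, ¬ GeomCollinear 𝓛 p q)
    (H₁ H₂ : Set P)
    (hH₁ : IsGeomHyperplane 𝓛 H₁) (hH₂ : IsGeomHyperplane 𝓛 H₂)
    (hcover : H₁ ∪ H₂ = Set.univ) :
    H₁ = Set.univ ∨ H₂ = Set.univ := by
  by_contra! hproper
  obtain ⟨q, hq⟩ := (Set.ne_univ_iff_exists_notMem _).mp hproper.1
  obtain ⟨p, hp⟩ := (Set.ne_univ_iff_exists_notMem _).mp hproper.2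
  have hlines := subset_or_subset_of_union_eq_univ hline3 hH₁.1 hH₂.1 hcover
  have hlines' : ∀ l ∈ 𝓛, l ⊆ H₂ ∨ l ⊆ H₁ := fun l hl => (hlines l hl).symm
  have hqp : ¬ GeomCollinear 𝓛 q p := fun h => hq (mem_of_collinear_of_not_mem hlines h hp)
  obtain ⟨l, hl, hpl⟩ := hpointline p
  obtain ⟨r, hrl, -, hqr⟩ := exists_collinear_ne hBS hl hpl hqp
  obtain ⟨m, hm, hqm, hrm⟩ := hqr
  have hrp : GeomCollinear 𝓛 r p := ⟨l, hl, hrl, hpl⟩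
  have hrq : GeomCollinear 𝓛 r q := ⟨m, hm, hrm, hqm⟩
  have hr := collinear_of_not_mem_inter hBS hlines hH₁.1 hH₂.1 hrp hp hrq hq
  obtain ⟨u, hur⟩ := hnondeg r
  have hru : ¬ GeomCollinear 𝓛 u r := fun h => hur h.symm
  have huAB : u ∈ H₁ ∩ H₂ := by
    by_contra h
    exact hur (hr u h)
  obtain ⟨x, hx, hux⟩ := exists_collinear_not_mem hBS hH₂.1 hl hrl
    (mem_of_collinear_of_not_mem hlines' hrq hq) hpl hp hru
  obtain ⟨y, hy, huy⟩ := exists_collinear_not_mem hBS hH₁.1 hm hrm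
    (mem_of_collinear_of_not_mem hlines hrp hp) hqm hq hru
  have hu := collinear_of_not_mem_inter hBS hlines hH₁.1 hH₂.1 hux hx huy hy
  exact hur (collinear_of_forall_not_mem_inter_collinear hline3 hBS hH₂.1 hr hu huAB.2 hp)

/-- A nondegenerate polar space (Buekenhout–Shult axioms) with nonempty
point set is never the union of two proper geometric hyperplanes. -/
theorem polar_space_not_union_of_two_proper_hyperplanes
    {P : Type*} [Nonempty P] (𝓛 : Set (Set P))
    (hline3 : ∀ l ∈ 𝓛, 3 ≤ l.encard)
    (hunique : ∀ p q : P, p ≠ q → ∀ l₁ ∈ 𝓛, ∀ l₂ ∈ 𝓛,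
      p ∈ l₁ → q ∈ l₁ → p ∈ l₂ → q ∈ l₂ → l₁ = l₂)
    (hpointline : ∀ p : P, ∃ l ∈ 𝓛, p ∈ l)
    (hBS : ∀ p : P, ∀ l ∈ 𝓛, p ∉ l →
      (∃! q : P, q ∈ l ∧ GeomCollinear 𝓛 p q) ∨ (∀ q ∈ l, GeomCollinear 𝓛 p q))
    (hnondeg : ∀ p : P, ∃ q : P, ¬ GeomCollinear 𝓛 p q)
    (H₁ H₂ : Set P)
    (hH₁ : IsGeomHyperplane 𝓛 H₁) (hH₂ : IsGeomHyperplane 𝓛 H₂)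
    (hcover : H₁ ∪ H₂ = Set.univ) :
    H₁ = Set.univ ∨ H₂ = Set.univ :=
  polar_space_not_union_of_two_proper_hyperplanes_general 𝓛 hline3 hpointline hBS hnondeg H₁ H₂ hH₁
    hH₂ hcover
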